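/- arXiv:1511.00763 — 2 statements merged into one kernel-verified Lean document; each statement's English description precedes it below -/
import Mathlib

section
/- Let θ be an algebraic integer of degree n > 2, R₀ = Z[θ], I = Z + Zθ + 2Zθ² + ... + 2Zθ^{n-1}, and R = Z + 2Zθ + ... + 2Zθ^{n-1}. Then for each 0 < k < n-1, I^k = Z + Zθ + ... + Zθ^k + 2Zθ^{k+1} + ... + 2Zθ^{n-1}, and I^{n-1} = R₀. -/
/-!
Write `P = ℤ[θ]` and `A_k = ℤ + ℤθ + ⋯ + ℤθ^k`. Since `θ` has degree `n`, `P` is spanned by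
`1, θ, …, θ^{n-1}`, so for `k < n` the module in question is `A_k + 2P`. As `A_k ⊆ P` and `P` is
a ring, `2P` absorbs every cross term of `(A_k + 2P)(A_1 + 2P)`, while `1 ∈ A_1` gives
`2P ⊆ 2P · A_1`; hence the product is `A_k A_1 + 2P = A_{k+1} + 2P`. For `k = n - 1` all
coefficients are `1`.
-/

/-- The colon (quotient) of two `ℤ`-submodules of a field `K`:
`(J : I) = {x ∈ K : x I ⊆ J}`. -/
def colonSub {K : Type*} [Field K] (J I : Submodule ℤ K) : Submodule ℤ K where
  carrier := {x : K | ∀ y ∈ I, x * y ∈ J}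
  add_mem' := by
    intro a b ha hb y hy
    have := J.add_mem (ha y hy) (hb y hy)
    simpa [add_mul] using this
  zero_mem' := by intro y hy; simp
  smul_mem' := by
    intro c x hx y hy
    rw [smul_mul_assoc]
    exact J.smul_mem c (hx y hy)

/-- The `ℤ`-module `ℤ + ℤθ + ⋯ + ℤθ^k + 2ℤθ^{k+1} + ⋯ + 2ℤθ^{n-1}`. -/
noncomputable def mixedSpan {K : Type*} [Field K] (θ : K) (n k : ℕ) : Submodule ℤ K :=
  Submodule.span ℤ (Set.range fun i : Fin n =>
    (if (i : ℕ) ≤ k then 1 else 2) * θ ^ (i : ℕ))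

/-- The order `R = ℤ + 2ℤθ + 2ℤθ² + ⋯ + 2ℤθ^{n-1}`. -/
noncomputable def suborderR {K : Type*} [Field K] (θ : K) (n : ℕ) : Submodule ℤ K :=
  Submodule.span ℤ (Set.range fun i : Fin n =>
    (if (i : ℕ) = 0 then 1 else 2) * θ ^ (i : ℕ))

open Submodule

namespace Submodule

variable {R A : Type*} [CommSemiring R] [CommSemiring A] [Algebra R A]

theorem mul_mul_le_mul_of_le {B D P : Submodule R A} (hB : B ≤ P) (hP : P * P ≤ P) :
    B * (D * P) ≤ D * P :=
  calc B * (D * P) = D * (B * P) := mul_left_comm B D P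
    _ ≤ D * (P * P) := by gcongr
    _ ≤ D * P := by gcongr

theorem sup_mul_sup_eq_mul_sup {B C Q : Submodule R A} (hB : B * Q ≤ Q) (hC : C * Q ≤ Q)
    (hQ : Q * Q ≤ Q) (hC1 : 1 ≤ C) : (B ⊔ Q) * (C ⊔ Q) = B * C ⊔ Q := by
  rw [mul_sup, sup_mul, sup_mul]
  apply le_antisymm
  · refine sup_le (sup_le le_sup_left ?_) (sup_le (le_sup_of_le_right hB) (le_sup_of_le_right hQ))
    exact le_sup_of_le_right (mul_comm C Q ▸ hC)
  · refine sup_le (le_sup_of_le_left le_sup_left) ?_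
    calc Q = Q * 1 := (mul_one Q).symm
      _ ≤ Q * C := by gcongr
      _ ≤ _ := le_sup_of_le_left le_sup_right

end Submodule

section TruncatedPowerSpan

variable {R : Type*} [CommRing R] (θ : R)

def truncatedPowerSpan (k : ℕ) : Submodule ℤ R :=
  span ℤ ((θ ^ ·) '' Set.Iic k)

theorem one_le_truncatedPowerSpan (k : ℕ) : 1 ≤ truncatedPowerSpan θ k :=
  Submodule.one_le.2 (subset_span ⟨0, Nat.zero_le k, pow_zero θ⟩)

theorem truncatedPowerSpan_le_adjoin (k : ℕ) :
    truncatedPowerSpan θ k ≤ Subalgebra.toSubmodule (Algebra.adjoin ℤ {θ}) :=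
  span_le.2 <| by
    rintro _ ⟨i, -, rfl⟩
    exact pow_mem (Algebra.self_mem_adjoin_singleton ℤ θ) i

theorem truncatedPowerSpan_succ (k : ℕ) :
    truncatedPowerSpan θ (k + 1) = truncatedPowerSpan θ k * truncatedPowerSpan θ 1 := by
  rw [truncatedPowerSpan, truncatedPowerSpan, truncatedPowerSpan, span_mul_span]
  congr 1
  ext x
  constructor
  · rintro ⟨m, hm, rfl⟩
    refine Set.mem_mul.2 ?_
    rcases (Set.mem_Iic.1 hm).lt_or_eq with hm | rfl
    · exact ⟨θ ^ m, ⟨m, Nat.lt_succ_iff.1 hm, rfl⟩, 1, ⟨0, Nat.zero_le 1, pow_zero θ⟩, mul_one _⟩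
    · exact ⟨θ ^ k, ⟨k, Set.mem_Iic.2 le_rfl, rfl⟩, θ, ⟨1, Set.mem_Iic.2 le_rfl, pow_one θ⟩,
        (pow_succ θ k).symm⟩
  · intro hx
    obtain ⟨_, ⟨i, hi, rfl⟩, _, ⟨j, hj, rfl⟩, rfl⟩ := Set.mem_mul.1 hx
    exact ⟨i + j, Nat.add_le_add hi hj, pow_add θ i j⟩

theorem truncatedPowerSpan_sup_mul_sup (k : ℕ) :
    (truncatedPowerSpan θ k ⊔ span ℤ {2} * Subalgebra.toSubmodule (Algebra.adjoin ℤ {θ})) *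
        (truncatedPowerSpan θ 1 ⊔ span ℤ {2} * Subalgebra.toSubmodule (Algebra.adjoin ℤ {θ})) =
      truncatedPowerSpan θ (k + 1) ⊔
        span ℤ {2} * Subalgebra.toSubmodule (Algebra.adjoin ℤ {θ}) := by
  set P := Subalgebra.toSubmodule (Algebra.adjoin ℤ {θ})
  have hP : P * P ≤ P := (Algebra.adjoin ℤ {θ}).isIdempotentElem_toSubmodule.le
  have h2 : span ℤ {(2 : R)} ≤ P :=
    span_le.2 <| Set.singleton_subset_iff.2 <| (Subalgebra.mem_toSubmodule _).2 (ofNat_mem _ 2)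
  have h2P : span ℤ {(2 : R)} * P ≤ P := le_trans (by gcongr) hP
  rw [truncatedPowerSpan_succ θ k]
  exact sup_mul_sup_eq_mul_sup (mul_mul_le_mul_of_le (truncatedPowerSpan_le_adjoin θ k) hP)
    (mul_mul_le_mul_of_le (truncatedPowerSpan_le_adjoin θ 1) hP) (mul_mul_le_mul_of_le h2P hP)
    (one_le_truncatedPowerSpan θ 1)

end TruncatedPowerSpan

section MixedSpan

variable {K : Type*} [Field K] {n : ℕ} {θ : K}

theorem mul_pow_mem_mixedSpan (k : ℕ) {i : ℕ} (hi : i < n) :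
    (if i ≤ k then 1 else 2) * θ ^ i ∈ mixedSpan θ n k :=
  subset_span ⟨⟨i, hi⟩, rfl⟩

theorem pow_mem_mixedSpan {i k : ℕ} (hi : i < n) (hik : i ≤ k) : θ ^ i ∈ mixedSpan θ n k := by
  simpa [hik] using mul_pow_mem_mixedSpan (θ := θ) k hi

theorem two_mul_pow_mem_mixedSpan {i : ℕ} (k : ℕ) (hi : i < n) : 2 * θ ^ i ∈ mixedSpan θ n k := by
  by_cases hik : i ≤ k
  · simpa [two_mul] using add_mem (pow_mem_mixedSpan hi hik) (pow_mem_mixedSpan hi hik)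
  · simpa [hik] using mul_pow_mem_mixedSpan (θ := θ) k hi

theorem mixedSpan_eq_span_pow_of_le {k : ℕ} (hk : n ≤ k + 1) :
    mixedSpan θ n k = span ℤ (Set.range fun i : Fin n => θ ^ (i : ℕ)) := by
  refine congrArg (span ℤ) (congrArg Set.range (funext fun i => ?_))
  rw [if_pos (by omega), one_mul]

variable [CharZero K]

theorem adjoin_toSubmodule_eq_span_pow (hint : IsIntegral ℤ θ)
    (hdeg : (minpoly ℚ θ).natDegree = n) :
    Subalgebra.toSubmodule (Algebra.adjoin ℤ {θ}) =
      span ℤ (Set.range fun i : Fin n => θ ^ (i : ℕ)) := by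
  have hdegℤ : (minpoly ℤ θ).natDegree = n := by
    rw [← hdeg, minpoly.isIntegrallyClosed_eq_field_fractions' ℚ hint,
      (minpoly.monic hint).natDegree_map]
  rw [← span_range_natDegree_eq_adjoin (minpoly.monic hint) (minpoly.aeval ℤ θ), hdegℤ]
  congr 1
  ext x
  simp [Fin.exists_iff]

theorem mixedSpan_eq_truncatedPowerSpan_sup (hint : IsIntegral ℤ θ)
    (hdeg : (minpoly ℚ θ).natDegree = n) {k : ℕ} (hk : k < n) :
    mixedSpan θ n k =
      truncatedPowerSpan θ k ⊔ span ℤ {2} * Subalgebra.toSubmodule (Algebra.adjoin ℤ {θ}) := by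
  apply le_antisymm
  · rw [mixedSpan, span_le]
    rintro _ ⟨i, rfl⟩
    dsimp only
    split_ifs with hik
    · exact mem_sup_left (subset_span ⟨i, hik, (one_mul _).symm⟩)
    · exact mem_sup_right (mul_mem_mul (mem_span_singleton_self 2)
        (pow_mem (Algebra.self_mem_adjoin_singleton ℤ θ) i))
  · rw [adjoin_toSubmodule_eq_span_pow hint hdeg, span_mul_span, truncatedPowerSpan, sup_le_iff,
      span_le, span_le]
    constructor
    · rintro _ ⟨i, hik, rfl⟩
      exact pow_mem_mixedSpan (hik.trans_lt hk) hik
    · intro x hx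
      obtain ⟨_, rfl, _, ⟨i, rfl⟩, rfl⟩ := Set.mem_mul.1 hx
      exact two_mul_pow_mem_mixedSpan k i.isLt

theorem mixedSpan_mul_mixedSpan_one (hint : IsIntegral ℤ θ)
    (hdeg : (minpoly ℚ θ).natDegree = n) {k : ℕ} (hk : k + 1 < n) :
    mixedSpan θ n k * mixedSpan θ n 1 = mixedSpan θ n (k + 1) := by
  rw [mixedSpan_eq_truncatedPowerSpan_sup hint hdeg (by omega : k < n),
    mixedSpan_eq_truncatedPowerSpan_sup hint hdeg (by omega : 1 < n),
    mixedSpan_eq_truncatedPowerSpan_sup hint hdeg hk]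
  exact truncatedPowerSpan_sup_mul_sup θ k

theorem mixedSpan_one_pow (hint : IsIntegral ℤ θ) (hdeg : (minpoly ℚ θ).natDegree = n) {k : ℕ}
    (hk : 1 ≤ k) (hkn : k < n) : mixedSpan θ n 1 ^ k = mixedSpan θ n k := by
  induction k, hk using Nat.le_induction with
  | base => exact pow_one _
  | succ k hk ih =>
    rw [pow_succ, ih (by omega), mixedSpan_mul_mixedSpan_one hint hdeg hkn]

end MixedSpan

/-- Let `θ` be an algebraic integer of degree `n > 2` and
`I = ℤ + ℤθ + 2ℤθ² + ⋯ + 2ℤθ^{n-1}`. Then for each `0 < k < n-1`,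
`I^k = ℤ + ℤθ + ⋯ + ℤθ^k + 2ℤθ^{k+1} + ⋯ + 2ℤθ^{n-1}`, and
`I^{n-1} = R₀ = ℤ[θ]`. -/
theorem stmt2 {K : Type*} [Field K] [CharZero K] {n : ℕ} (hn : 2 < n)
    (θ : K) (hint : IsIntegral ℤ θ) (hdeg : (minpoly ℚ θ).natDegree = n) :
    (∀ k : ℕ, 0 < k → k < n - 1 → (mixedSpan θ n 1) ^ k = mixedSpan θ n k) ∧
    (mixedSpan θ n 1) ^ (n - 1) =
      Submodule.span ℤ (Set.range fun i : Fin n => θ ^ (i : ℕ)) := by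
  refine ⟨fun k hk hkn => mixedSpan_one_pow hint hdeg hk (by omega), ?_⟩
  rw [mixedSpan_one_pow hint hdeg (by omega) (by omega), mixedSpan_eq_span_pow_of_le (by omega)]
end

section
/- Suppose M ∈ GL_{nk}(Z) satisfies (⊕_{i=1}^k B)M = M(⊕_{i=1}^k A_i) with A = A_1, all matrices in GL_n(Z) with the same irreducible characteristic polynomial. Then the ideals I and J associated to A and B are weakly equivalent; in fact with X = (J:I) and Y = (I:J) one has XY = (I:I) = (J:J), IX = J, and JY = I. -/
open Matrix

theorem colonSub_eq_div {K : Type*} [Field K] (J I : Submodule ℤ K) : colonSub J I = J / I := rfl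

namespace Submodule

variable {R A : Type*} [CommSemiring R] [CommSemiring A] [Algebra R A] {I J : Submodule R A}

theorem div_mul_le_self : J / I * I ≤ J := le_div_iff_mul_le.mp le_rfl

theorem div_mul_div_le (L J I : Submodule R A) : L / J * (J / I) ≤ L / I := by
  rw [le_div_iff_mul_le, mul_assoc]
  calc L / J * (J / I * I) ≤ L / J * J := mul_le_mul' le_rfl div_mul_le_self
    _ ≤ L := div_mul_le_self

theorem mul_div_eq_of_one_mem_div_mul_div (h : (1 : A) ∈ J / I * (I / J)) :
    I * (J / I) = J := by
  refine le_antisymm (by rw [mul_comm]; exact div_mul_le_self) ?_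
  calc J = J * 1 := (mul_one J).symm
    _ ≤ J * (J / I * (I / J)) := mul_le_mul' le_rfl (one_le.mpr h)
    _ = J * (I / J) * (J / I) := by rw [mul_comm (J / I), mul_assoc]
    _ ≤ I * (J / I) := mul_le_mul' (by rw [mul_comm]; exact div_mul_le_self) le_rfl

theorem div_mul_div_eq_of_one_mem_div_mul_div (h : (1 : A) ∈ J / I * (I / J)) :
    J / I * (I / J) = I / I := by
  refine le_antisymm (by rw [mul_comm]; exact div_mul_div_le I J I) ?_
  calc I / I = I / I * 1 := (mul_one _).symm
    _ ≤ I / I * (J / I * (I / J)) := mul_le_mul' le_rfl (one_le.mpr h)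
    _ = J / I * (I / I) * (I / J) := by rw [← mul_assoc, mul_comm (I / I)]
    _ ≤ J / I * (I / J) := mul_le_mul' (div_mul_div_le J I I) le_rfl

theorem weakEquiv_of_one_mem_div_mul_div (h : (1 : A) ∈ J / I * (I / J)) :
    I * (J / I) = J ∧ J * (I / J) = I ∧ J / I * (I / J) = I / I ∧ I / I = J / J := by
  have h' : (1 : A) ∈ I / J * (J / I) := by rwa [mul_comm]
  refine ⟨mul_div_eq_of_one_mem_div_mul_div h, mul_div_eq_of_one_mem_div_mul_div h',
    div_mul_div_eq_of_one_mem_div_mul_div h, ?_⟩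
  rw [← div_mul_div_eq_of_one_mem_div_mul_div h, mul_comm,
    div_mul_div_eq_of_one_mem_div_mul_div h']

theorem mem_div_span_range_of_forall_mul_mem {ι : Type*} {c : A} {v : ι → A}
    (hc : ∀ i, c * v i ∈ J) : c ∈ J / span R (Set.range v) := by
  refine mem_div_iff_forall_mul_mem.mpr fun y hy => ?_
  induction hy using span_induction with
  | mem _ hy => obtain ⟨i, rfl⟩ := hy; exact hc i
  | zero => simp
  | add _ _ _ _ hx hy => rw [mul_add]; exact add_mem hx hy
  | smul r _ _ hx => rw [mul_smul_comm]; exact smul_mem _ r hx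

end Submodule

namespace Matrix

section Blocks

variable {m n o p q R : Type*} [Fintype m] [Fintype o] [NonUnitalNonAssocSemiring R]

theorem submatrix_blockDiagonal_mul [DecidableEq o] (d : o → Matrix m m R)
    (M : Matrix (m × o) (n × p) R) (j : o) (j' : p) :
    (blockDiagonal d * M).submatrix (·, j) (·, j') = d j * M.submatrix (·, j) (·, j') := by
  ext i i'
  simp [mul_apply, Fintype.sum_prod_type, blockDiagonal_apply]

theorem submatrix_mul_blockDiagonal [DecidableEq o] (d : o → Matrix m m R)
    (M : Matrix (n × p) (m × o) R) (j : p) (j' : o) :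
    (M * blockDiagonal d).submatrix (·, j) (·, j') = M.submatrix (·, j) (·, j') * d j' := by
  ext i i'
  simp [mul_apply, Fintype.sum_prod_type, blockDiagonal_apply]

theorem submatrix_mul_prod (M : Matrix (n × p) (m × o) R) (N : Matrix (m × o) (n × q) R)
    (j : p) (j' : q) :
    (M * N).submatrix (·, j) (·, j') =
      ∑ l, M.submatrix (·, j) (·, l) * N.submatrix (·, l) (·, j') := by
  ext i i'
  simp only [submatrix_apply, mul_apply, Fintype.sum_prod_type, sum_apply]
  exact Finset.sum_comm

theorem exists_intertwiners_of_blockDiagonal_mul_eq [DecidableEq m] [DecidableEq o] {R : Type*}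
    [Ring R] {B : Matrix m m R} {A : o → Matrix m m R} {M : Matrix (m × o) (m × o) R}
    (hM : IsUnit M) (hconj : blockDiagonal (fun _ => B) * M = M * blockDiagonal A) (j₀ : o) :
    ∃ P Q : o → Matrix m m R, (∀ j, B * P j = P j * A j₀) ∧ (∀ j, A j₀ * Q j = Q j * B) ∧
      ∑ j, Q j * P j = 1 := by
  obtain ⟨U, rfl⟩ := hM
  set N : Matrix (m × o) (m × o) R := ↑U⁻¹
  have hconj' : N * blockDiagonal (fun _ => B) = blockDiagonal A * N :=
    SemiconjBy.units_inv_symm_left hconj.symm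
  refine ⟨fun j => (U : Matrix _ _ R).submatrix (·, j) (·, j₀),
    fun j => N.submatrix (·, j₀) (·, j), fun j => ?_, fun j => ?_, ?_⟩
  · simpa only [submatrix_blockDiagonal_mul, submatrix_mul_blockDiagonal] using
      congrArg (·.submatrix (·, j) (·, j₀)) hconj
  · simpa only [submatrix_blockDiagonal_mul, submatrix_mul_blockDiagonal] using
      (congrArg (·.submatrix (·, j₀) (·, j)) hconj').symm
  · simpa only [submatrix_mul_prod, submatrix_one _ (Prod.mk_left_injective j₀)] using
      congrArg (·.submatrix (·, j₀) (·, j₀)) U.inv_mul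

end Blocks

variable {m n : Type*} [Fintype n]

theorem exists_eq_smul_of_separable_charpoly [DecidableEq n] {F : Type*} [Field F]
    {A : Matrix n n F} (hA : A.charpoly.Separable) {β : F} {v w : n → F} (hv0 : v ≠ 0)
    (hv : A *ᵥ v = β • v) (hw : A *ᵥ w = β • w) : ∃ c : F, w = c • v := by
  set E := Module.End.eigenspace (toLin' A) β
  have hE : Module.finrank F E ≤ 1 := by
    refine (LinearMap.finrank_eigenspace_le _ β).trans ?_
    rw [charpoly_toLin']
    exact Polynomial.rootMultiplicity_le_one_of_separable hA β
  have hvE : F ∙ v = E :=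
    Submodule.eq_of_le_of_finrank_le
      ((Submodule.span_singleton_le_iff_mem _ _).mpr (Module.End.mem_eigenspace_iff.mpr hv))
      (by rwa [finrank_span_singleton hv0])
  have hwE : w ∈ F ∙ v := hvE ▸ Module.End.mem_eigenspace_iff.mpr hw
  obtain ⟨c, rfl⟩ := Submodule.mem_span_singleton.mp hwE
  exact ⟨c, rfl⟩

theorem separable_charpoly_map_of_irreducible [DecidableEq n] {K : Type*} [Field K] [CharZero K]
    {B : Matrix n n ℤ} (hirr : Irreducible (B.charpoly.map (Int.castRingHom ℚ))) :
    (B.map (algebraMap ℤ K)).charpoly.Separable := by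
  rw [charpoly_map, IsScalarTower.algebraMap_eq ℤ ℚ K, ← Polynomial.map_map, algebraMap_int_eq]
  exact hirr.separable.map

theorem mulVec_mulVec_eq_smul_of_mul_eq_mul [Fintype m] {R : Type*} [CommSemiring R]
    {B : Matrix m m R} {P : Matrix m n R} {A : Matrix n n R} (hP : B * P = P * A) {β : R}
    {u : n → R} (hu : A *ᵥ u = β • u) : B *ᵥ (P *ᵥ u) = β • (P *ᵥ u) := by
  rw [mulVec_mulVec, hP, ← mulVec_mulVec, hu, mulVec_smul]

theorem map_mulVec_mem_span_range {R A : Type*} [CommSemiring R] [Semiring A] [Algebra R A]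
    (P : Matrix m n R) (u : n → A) (i : m) :
    (P.map (algebraMap R A) *ᵥ u) i ∈ Submodule.span R (Set.range u) :=
  Submodule.sum_mem _ fun a _ => by
    show algebraMap R A (P i a) * u a ∈ _
    rw [← Algebra.smul_def]
    exact Submodule.smul_mem _ _ (Submodule.subset_span ⟨a, rfl⟩)

theorem exists_mem_div_of_mul_eq_mul [Fintype m] [DecidableEq m] {R K : Type*} [CommRing R]
    [Field K] [Algebra R K] {B : Matrix m m R} {P : Matrix m n R} {A : Matrix n n R}
    (hB : (B.map (algebraMap R K)).charpoly.Separable) (hP : B * P = P * A) {β : K}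
    {u : n → K} {v : m → K} (hu : A.map (algebraMap R K) *ᵥ u = β • u) (hv0 : v ≠ 0)
    (hv : B.map (algebraMap R K) *ᵥ v = β • v) :
    ∃ c ∈ Submodule.span R (Set.range u) / Submodule.span R (Set.range v),
      P.map (algebraMap R K) *ᵥ u = c • v := by
  have hPK : B.map (algebraMap R K) * P.map (algebraMap R K) =
      P.map (algebraMap R K) * A.map (algebraMap R K) := by
    rw [← Matrix.map_mul, ← Matrix.map_mul, hP]
  obtain ⟨c, hc⟩ := exists_eq_smul_of_separable_charpoly hB hv0 hv
    (mulVec_mulVec_eq_smul_of_mul_eq_mul hPK hu)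
  refine ⟨c, Submodule.mem_div_span_range_of_forall_mul_mem fun i => ?_, hc⟩
  simpa [hc] using map_mulVec_mem_span_range P u i

end Matrix

theorem stmt12_general {K : Type*} [Field K] [CharZero K] {n k : ℕ} (hk : 0 < k)
    (B : Matrix (Fin n) (Fin n) ℤ) (A : Fin k → Matrix (Fin n) (Fin n) ℤ)
    (hirr : Irreducible (Polynomial.map (Int.castRingHom ℚ) B.charpoly))
    (hcp : ∀ i, (A i).charpoly = B.charpoly)
    (β : K)
    (u v : Fin n → K) (hu0 : u ≠ 0) (hv0 : v ≠ 0)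
    (hu : Matrix.mulVec ((A ⟨0, hk⟩).map (algebraMap ℤ K)) u = β • u)
    (hv : Matrix.mulVec (B.map (algebraMap ℤ K)) v = β • v)
    (M : Matrix (Fin n × Fin k) (Fin n × Fin k) ℤ) (hM : IsUnit M.det)
    (hconj : Matrix.blockDiagonal (fun _ : Fin k => B) * M = M * Matrix.blockDiagonal A) :
    Submodule.span ℤ (Set.range u)
        * colonSub (Submodule.span ℤ (Set.range v)) (Submodule.span ℤ (Set.range u))
      = Submodule.span ℤ (Set.range v) ∧
    Submodule.span ℤ (Set.range v)
        * colonSub (Submodule.span ℤ (Set.range u)) (Submodule.span ℤ (Set.range v))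
      = Submodule.span ℤ (Set.range u) ∧
    colonSub (Submodule.span ℤ (Set.range v)) (Submodule.span ℤ (Set.range u))
        * colonSub (Submodule.span ℤ (Set.range u)) (Submodule.span ℤ (Set.range v))
      = colonSub (Submodule.span ℤ (Set.range u)) (Submodule.span ℤ (Set.range u)) ∧
    colonSub (Submodule.span ℤ (Set.range u)) (Submodule.span ℤ (Set.range u))
      = colonSub (Submodule.span ℤ (Set.range v)) (Submodule.span ℤ (Set.range v)) := by
  obtain ⟨P, Q, hP, hQ, hQP⟩ := exists_intertwiners_of_blockDiagonal_mul_eq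
    ((isUnit_iff_isUnit_det M).mpr hM) hconj ⟨0, hk⟩
  have hsepB := separable_charpoly_map_of_irreducible (K := K) hirr
  have hsepA : ((A ⟨0, hk⟩).map (algebraMap ℤ K)).charpoly.Separable := by
    rwa [charpoly_map, hcp, ← charpoly_map]
  choose c hcI hc using fun j => exists_mem_div_of_mul_eq_mul hsepB (hP j) hu hv0 hv
  choose d hdJ hd using fun j => exists_mem_div_of_mul_eq_mul hsepA (hQ j) hv hu0 hu
  have hcd : ∑ j, c j * d j = 1 := by
    refine smul_left_injective K hu0 ?_
    calc (∑ j, c j * d j) • u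
        = ∑ j, (Q j).map (algebraMap ℤ K) *ᵥ ((P j).map (algebraMap ℤ K) *ᵥ u) := by
          simp only [hc, hd, mulVec_smul, smul_smul, Finset.sum_smul]
      _ = (∑ j, Q j * P j).map (algebraMap ℤ K) *ᵥ u := by
          rw [← RingHom.mapMatrix_apply, map_sum, sum_mulVec]
          simp only [map_mul, RingHom.mapMatrix_apply, mulVec_mulVec]
      _ = (1 : K) • u := by simp [hQP]
  have h1 : (1 : K) ∈ _ / _ * (_ / _) := hcd ▸ Submodule.sum_mem _ fun j _ =>
    mul_comm (d j) (c j) ▸ Submodule.mul_mem_mul (hdJ j) (hcI j)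
  simpa only [colonSub_eq_div] using Submodule.weakEquiv_of_one_mem_div_mul_div h1

/-- Suppose `M ∈ GL_{nk}(ℤ)` satisfies `(⊕ᵢ B) M = M (⊕ᵢ Aᵢ)` with `A = A₁`, all matrices
in `GL_n(ℤ)` with the same irreducible characteristic polynomial. Then the ideals `I` and
`J` associated to `A` and `B` are weakly equivalent; in fact with `X = (J : I)` and
`Y = (I : J)` one has `XY = (I : I) = (J : J)`, `IX = J` and `JY = I`. -/
theorem stmt12 {K : Type*} [Field K] [CharZero K] {n k : ℕ} (hn : 0 < n) (hk : 0 < k)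
    (B : Matrix (Fin n) (Fin n) ℤ) (A : Fin k → Matrix (Fin n) (Fin n) ℤ)
    (hB : IsUnit B.det) (hA : ∀ i, IsUnit (A i).det)
    (hirr : Irreducible (Polynomial.map (Int.castRingHom ℚ) B.charpoly))
    (hcp : ∀ i, (A i).charpoly = B.charpoly)
    (β : K) (hβ : Polynomial.aeval β B.charpoly = 0)
    (u v : Fin n → K) (hu0 : u ≠ 0) (hv0 : v ≠ 0)
    (hu : Matrix.mulVec ((A ⟨0, hk⟩).map (algebraMap ℤ K)) u = β • u)
    (hv : Matrix.mulVec (B.map (algebraMap ℤ K)) v = β • v)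
    (M : Matrix (Fin n × Fin k) (Fin n × Fin k) ℤ) (hM : IsUnit M.det)
    (hconj : Matrix.blockDiagonal (fun _ : Fin k => B) * M = M * Matrix.blockDiagonal A) :
    Submodule.span ℤ (Set.range u)
        * colonSub (Submodule.span ℤ (Set.range v)) (Submodule.span ℤ (Set.range u))
      = Submodule.span ℤ (Set.range v) ∧
    Submodule.span ℤ (Set.range v)
        * colonSub (Submodule.span ℤ (Set.range u)) (Submodule.span ℤ (Set.range v))
      = Submodule.span ℤ (Set.range u) ∧
    colonSub (Submodule.span ℤ (Set.range v)) (Submodule.span ℤ (Set.range u))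
        * colonSub (Submodule.span ℤ (Set.range u)) (Submodule.span ℤ (Set.range v))
      = colonSub (Submodule.span ℤ (Set.range u)) (Submodule.span ℤ (Set.range u)) ∧
    colonSub (Submodule.span ℤ (Set.range u)) (Submodule.span ℤ (Set.range u))
      = colonSub (Submodule.span ℤ (Set.range v)) (Submodule.span ℤ (Set.range v)) :=
  stmt12_general hk B A hirr hcp β u v hu0 hv0 hu hv M hM hconj
end
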